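/- arXiv:1909.01240 — 2 statements merged into one kernel-verified Lean document; each statement's English description precedes it below -/
import Mathlib

section
/- Define elements h_{n+1} = H_{n+1} and h_i = h_{i+1} + (1/2)X_{μ_i − μ_{2n+2−i}} (1 ≤ i ≤ n) in gl_{2n+1}(ℂ)^θ, where X_{μ_i−μ_{2n+2−i}} is the root vector defined by iterated brackets of the generators e_j = E_j + F_{2n+1−j}, f_j = F_j + E_{2n+1−j}. Then under the isomorphism φ : gl_{2n+1}^θ → gl_{n+1} ⊕ gl_n (φ(e_i) = e_i + ē_i for i < n, φ(e_n) = 2e_n, φ(f_i) = f_i + f̄_i for i < n, φ(f_n) = f_n, φ(d_i) = h_i + h̄_i, φ(d_{n+1}) = 2h_{n+1}), one has φ(h_i) = h_i = E_{i,i} in the gl_{n+1} factor for all 1 ≤ i ≤ n+1. -/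
open Matrix

noncomputable section

/-- `gl_{2n+1}(ℂ)` with bracket `[X,Y] = XY - YX`. -/
abbrev gl (n : ℕ) := Matrix (Fin (2*n+1)) (Fin (2*n+1)) ℂ

/-- The matrix unit `E_{p,q}` (1-based indexing). -/
def Em (n p q : ℕ) : gl n :=
  Matrix.of fun i j => if (i : ℕ) + 1 = p ∧ (j : ℕ) + 1 = q then 1 else 0

/-- The matrix unit `E_{p,q}` in `gl_m` (1-based indexing). -/
def Eu (m p q : ℕ) : Matrix (Fin m) (Fin m) ℂ :=
  Matrix.of fun i j => if (i : ℕ) + 1 = p ∧ (j : ℕ) + 1 = q then 1 else 0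

/-- `e_i = E_i + F_{2n+1-i} = E_{i,i+1} + E_{2n+2-i,2n+1-i}`. -/
def eG (n i : ℕ) : gl n := Em n i (i+1) + Em n (2*n+2-i) (2*n+1-i)

/-- `f_i = F_i + E_{2n+1-i} = E_{i+1,i} + E_{2n+1-i,2n+2-i}`. -/
def fG (n i : ℕ) : gl n := Em n (i+1) i + Em n (2*n+1-i) (2*n+2-i)

/-- `d_a = H_a + H_{2n+2-a}`; note `d_{n+1} = 2 H_{n+1}`. -/
def dG (n a : ℕ) : gl n := Em n a a + Em n (2*n+2-a) (2*n+2-a)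

/-- The involution `θ` of `gl_{2n+1}(ℂ)` with `θ(E_i) = F_{2n+1-i}`, `θ(F_i) = E_{2n+1-i}`,
`θ(H_i) = H_{2n+2-i}`. -/
def theta (n : ℕ) (X : gl n) : gl n := Matrix.of fun i j => X i.rev j.rev

theorem theta_linear (n : ℕ) (c : ℂ) (X Y : gl n) :
    theta n (X + Y) = theta n X + theta n Y ∧ theta n (c • X) = c • theta n X := by
  constructor <;> (ext i j; simp [theta])

/-- The fixed-point subalgebra `gl_{2n+1}(ℂ)^θ`, as a subspace. -/
def Fixed (n : ℕ) : Submodule ℂ (gl n) where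
  carrier := {X | theta n X = X}
  add_mem' := by
    intro a b ha hb
    simp only [Set.mem_setOf_eq] at *
    rw [(theta_linear n 0 a b).1, ha, hb]
  zero_mem' := by
    simp only [Set.mem_setOf_eq]
    ext i j; simp [theta]
  smul_mem' := by
    intro c x hx
    simp only [Set.mem_setOf_eq] at *
    rw [(theta_linear n c x x).2, hx]

/-- The root vector attached to the simple root `μ_i - μ_{i+1}`. -/
def simpleX (n i : ℕ) : gl n := if i ≤ n then eG n i else fG n (2*n+1-i)

/-- The root vector `X_{μ_i-μ_j}`, defined by iterated brackets. -/
def Xv (n i j : ℕ) : gl n :=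
  if _ : j ≤ i + 1 then simpleX n i else ⁅simpleX n i, Xv n (i+1) j⁆
termination_by j - i
decreasing_by omega

/-- The elements `h_{n+1} = H_{n+1}`, `h_i = h_{i+1} + ½ X_{μ_i-μ_{2n+2-i}}` of
`gl_{2n+1}(ℂ)^θ`. -/
def hv (n i : ℕ) : gl n :=
  if n + 1 ≤ i then Em n (n+1) (n+1)
  else hv n (i+1) + (1/2 : ℂ) • Xv n i (2*n+2-i)
termination_by n + 1 - i
decreasing_by omega

-- ===================== auxiliary lemmas =====================

section Aux

lemma Eu_mul_same (m a b d : ℕ) (h1 : 1 ≤ b) (h2 : b ≤ m) :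
    Eu m a b * Eu m b d = Eu m a d := by
  obtain ⟨p, hp⟩ : ∃ p : Fin m, (p : ℕ) = b - 1 := ⟨⟨b - 1, by omega⟩, rfl⟩
  ext i j
  rw [Matrix.mul_apply, Finset.sum_eq_single p]
  · simp only [Eu, Matrix.of_apply]
    split_ifs <;> first | (exfalso; omega) | norm_num
  · intro k _ hk
    have hk' : (k : ℕ) ≠ b - 1 := fun h => hk (Fin.ext (by rw [h, ← hp]))
    simp only [Eu, Matrix.of_apply]
    split_ifs <;> first | (exfalso; omega) | norm_num
  · intro h; exact absurd (Finset.mem_univ p) h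

lemma Eu_mul_ne (m a b c d : ℕ) (h : b ≠ c) : Eu m a b * Eu m c d = 0 := by
  ext i j
  rw [Matrix.mul_apply]
  simp only [Matrix.zero_apply]
  apply Finset.sum_eq_zero
  intro k _
  simp only [Eu, Matrix.of_apply]
  split_ifs <;> first | (exfalso; omega) | norm_num

lemma Em_mul_same (n a b d : ℕ) (h1 : 1 ≤ b) (h2 : b ≤ 2*n+1) :
    Em n a b * Em n b d = Em n a d :=
  Eu_mul_same (2*n+1) a b d h1 h2

lemma Em_mul_ne (n a b c d : ℕ) (h : b ≠ c) : Em n a b * Em n c d = 0 :=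
  Eu_mul_ne (2*n+1) a b c d h

lemma lie_Eu_same (m a b c : ℕ) (h1 : 1 ≤ b) (h2 : b ≤ m) (h3 : c ≠ a) :
    ⁅Eu m a b, Eu m b c⁆ = Eu m a c := by
  rw [Ring.lie_def, Eu_mul_same m a b c h1 h2, Eu_mul_ne m b c a b h3, sub_zero]

lemma lie_Eu_diag (m a b : ℕ) (ha1 : 1 ≤ a) (ha : a ≤ m) (hb1 : 1 ≤ b) (hb : b ≤ m)
    (hab : a ≠ b) : ⁅Eu m a b, Eu m b a⁆ = Eu m a a - Eu m b b := by
  rw [Ring.lie_def, Eu_mul_same m a b a hb1 hb, Eu_mul_same m b a b ha1 ha]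

lemma lie_smul_r (m : ℕ) (c : ℂ) (A B : Matrix (Fin m) (Fin m) ℂ) :
    ⁅A, c • B⁆ = c • ⁅A, B⁆ := by
  rw [Ring.lie_def, Ring.lie_def, mul_smul_comm, smul_mul_assoc, smul_sub]

lemma smul_lie_r (m : ℕ) (c : ℂ) (A B : Matrix (Fin m) (Fin m) ℂ) :
    ⁅c • A, B⁆ = c • ⁅A, B⁆ := by
  rw [Ring.lie_def, Ring.lie_def, mul_smul_comm, smul_mul_assoc, smul_sub]

lemma lie_zero_r (m : ℕ) (A : Matrix (Fin m) (Fin m) ℂ) :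
    ⁅A, (0 : Matrix (Fin m) (Fin m) ℂ)⁆ = 0 := by
  rw [Ring.lie_def]; simp

lemma neg_lie_r (m : ℕ) (A B : Matrix (Fin m) (Fin m) ℂ) : ⁅-A, B⁆ = -⁅A, B⁆ := by
  rw [Ring.lie_def, Ring.lie_def, neg_mul, mul_neg]; abel

/-- `U' n a b = E_{a,b} + E_{a',b'}` with `x' = 2n+2-x`: the θ-fixed combination. -/
def U' (n a b : ℕ) : gl n := Em n a b + Em n (2*n+2-a) (2*n+2-b)

/-- `V' n i k = E_{k',i} + E_{k,i'}`. -/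
def V' (n i k : ℕ) : gl n := Em n (2*n+2-k) i + Em n k (2*n+2-i)

lemma theta_Em (n p q : ℕ) : theta n (Em n p q) = Em n (2*n+2-p) (2*n+2-q) := by
  ext i j
  have hi := i.isLt
  have hj := j.isLt
  simp only [theta, Em, Matrix.of_apply, Fin.val_rev]
  split_ifs <;> first | (exfalso; omega) | rfl

lemma U'_mem (n a b : ℕ) (ha1 : 1 ≤ a) (ha : a ≤ 2*n+1) (hb1 : 1 ≤ b) (hb : b ≤ 2*n+1) :
    U' n a b ∈ Fixed n := by
  show theta n _ = _
  rw [show U' n a b = Em n a b + Em n (2*n+2-a) (2*n+2-b) from rfl]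
  rw [(theta_linear n 0 _ _).1, theta_Em, theta_Em]
  rw [show 2*n+2-(2*n+2-a) = a by omega, show 2*n+2-(2*n+2-b) = b by omega, add_comm]

lemma eG_eq (n i : ℕ) : eG n i = U' n i (i+1) := by
  unfold eG U'
  rw [show 2*n+2-(i+1) = 2*n+1-i by omega]

lemma fG_eq (n j : ℕ) : fG n j = U' n (j+1) j := by
  unfold fG U'
  rw [show 2*n+2-(j+1) = 2*n+1-j by omega]

lemma fG_eq' (n k : ℕ) (h1 : n+1 ≤ k) (h2 : k ≤ 2*n) : fG n (2*n+1-k) = U' n k (k+1) := by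
  unfold fG U'
  rw [show 2*n+1-k+1 = 2*n+2-k by omega, show 2*n+1-(2*n+1-k) = k by omega,
    show 2*n+2-(2*n+1-k) = k+1 by omega, show 2*n+2-(k+1) = 2*n+1-k by omega]
  abel

lemma simpleX_eq (n k : ℕ) (h1 : 1 ≤ k) (h2 : k ≤ 2*n) : simpleX n k = U' n k (k+1) := by
  unfold simpleX
  split_ifs with h
  · exact eG_eq n k
  · exact fG_eq' n k (by omega) h2

lemma U'_fGn (n : ℕ) (h : 1 ≤ n) : U' n (n+1) n = U' n (n+1) (n+2) := by
  unfold U'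
  rw [show 2*n+2-(n+1) = n+1 by omega, show 2*n+2-n = n+2 by omega,
    show 2*n+2-(n+2) = n by omega]
  abel

lemma U'_fGi (n i : ℕ) (h1 : 1 ≤ i) (h2 : i ≤ n) :
    U' n (2*n+1-i) (2*n+2-i) = U' n (i+1) i := by
  unfold U'
  rw [show 2*n+2-(2*n+1-i) = i+1 by omega, show 2*n+2-(2*n+2-i) = i by omega,
    show 2*n+2-(i+1) = 2*n+1-i by omega]
  abel

lemma br_gen (n a b c : ℕ) (ha1 : 1 ≤ a) (ha : a ≤ 2*n+1) (hb1 : 1 ≤ b) (hb : b ≤ 2*n+1)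
    (hbn : b ≠ n+1) (hc1 : 1 ≤ c) (hc : c ≤ 2*n+1) (hac : a ≠ c) (hac2 : a + c ≠ 2*n+2) :
    ⁅U' n a b, U' n b c⁆ = U' n a c := by
  unfold U'
  rw [Ring.lie_def]
  simp only [add_mul, mul_add]
  rw [Em_mul_same n a b c hb1 hb,
    Em_mul_ne n a b (2*n+2-b) (2*n+2-c) (by omega),
    Em_mul_ne n (2*n+2-a) (2*n+2-b) b c (by omega),
    Em_mul_same n (2*n+2-a) (2*n+2-b) (2*n+2-c) (by omega) (by omega),
    Em_mul_ne n b c a b (by omega),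
    Em_mul_ne n b c (2*n+2-a) (2*n+2-b) (by omega),
    Em_mul_ne n (2*n+2-b) (2*n+2-c) a b (by omega),
    Em_mul_ne n (2*n+2-b) (2*n+2-c) (2*n+2-a) (2*n+2-b) (by omega)]
  abel

lemma br_A (n i : ℕ) (h1 : 1 ≤ i) (h2 : i < n) :
    ⁅U' n i (n+1), U' n (n+1) (n+2)⁆ = U' n i n + U' n i (n+2) := by
  unfold U'
  rw [show 2*n+2-(n+1) = n+1 by omega, show 2*n+2-(n+2) = n by omega,
    show 2*n+2-n = n+2 by omega]
  rw [Ring.lie_def]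
  simp only [add_mul, mul_add]
  rw [Em_mul_same n i (n+1) (n+2) (by omega) (by omega),
    Em_mul_same n i (n+1) n (by omega) (by omega),
    Em_mul_same n (2*n+2-i) (n+1) (n+2) (by omega) (by omega),
    Em_mul_same n (2*n+2-i) (n+1) n (by omega) (by omega),
    Em_mul_ne n (n+1) (n+2) i (n+1) (by omega),
    Em_mul_ne n (n+1) (n+2) (2*n+2-i) (n+1) (by omega),
    Em_mul_ne n (n+1) n i (n+1) (by omega),
    Em_mul_ne n (n+1) n (2*n+2-i) (n+1) (by omega)]
  abel

lemma br_B (n i : ℕ) (h1 : 1 ≤ i) (h2 : i < n) :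
    ⁅U' n i (2*n+1-i), U' n (2*n+1-i) (2*n+2-i)⁆ =
      U' n i (2*n+2-i) - U' n (i+1) (2*n+1-i) := by
  unfold U'
  rw [show 2*n+2-(2*n+1-i) = i+1 by omega, show 2*n+2-(2*n+2-i) = i by omega,
    show 2*n+2-(i+1) = 2*n+1-i by omega]
  rw [Ring.lie_def]
  simp only [add_mul, mul_add]
  rw [Em_mul_same n i (2*n+1-i) (2*n+2-i) (by omega) (by omega),
    Em_mul_ne n i (2*n+1-i) (i+1) i (by omega),
    Em_mul_ne n (2*n+2-i) (i+1) (2*n+1-i) (2*n+2-i) (by omega),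
    Em_mul_same n (2*n+2-i) (i+1) i (by omega) (by omega),
    Em_mul_ne n (2*n+1-i) (2*n+2-i) i (2*n+1-i) (by omega),
    Em_mul_same n (2*n+1-i) (2*n+2-i) (i+1) (by omega) (by omega),
    Em_mul_same n (i+1) i (2*n+1-i) (by omega) (by omega),
    Em_mul_ne n (i+1) i (2*n+2-i) (i+1) (by omega)]
  abel

lemma br_C (n : ℕ) (h : 1 ≤ n) :
    ⁅U' n n (n+1), U' n (n+1) (n+2)⁆ = (dG n n + U' n n (n+2)) - dG n (n+1) := by
  unfold U' dG
  rw [show 2*n+2-(n+1) = n+1 by omega, show 2*n+2-(n+2) = n by omega,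
    show 2*n+2-n = n+2 by omega]
  rw [Ring.lie_def]
  simp only [add_mul, mul_add]
  rw [Em_mul_same n n (n+1) (n+2) (by omega) (by omega),
    Em_mul_same n n (n+1) n (by omega) (by omega),
    Em_mul_same n (n+2) (n+1) (n+2) (by omega) (by omega),
    Em_mul_same n (n+2) (n+1) n (by omega) (by omega),
    Em_mul_ne n (n+1) (n+2) n (n+1) (by omega),
    Em_mul_same n (n+1) (n+2) (n+1) (by omega) (by omega),
    Em_mul_same n (n+1) n (n+1) (by omega) (by omega),
    Em_mul_ne n (n+1) n (n+2) (n+1) (by omega)]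
  abel

lemma br_b (n i k : ℕ) (h1 : 1 ≤ i) (hk1 : n+2 ≤ k) (hk2 : k ≤ 2*n-i) :
    ⁅U' n k (k+1), V' n i (k+1)⁆ = V' n i k := by
  unfold U' V'
  rw [show 2*n+2-(k+1) = 2*n+1-k by omega]
  rw [Ring.lie_def]
  simp only [add_mul, mul_add]
  rw [Em_mul_ne n k (k+1) (2*n+1-k) i (by omega),
    Em_mul_same n k (k+1) (2*n+2-i) (by omega) (by omega),
    Em_mul_same n (2*n+2-k) (2*n+1-k) i (by omega) (by omega),
    Em_mul_ne n (2*n+2-k) (2*n+1-k) (k+1) (2*n+2-i) (by omega),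
    Em_mul_ne n (2*n+1-k) i k (k+1) (by omega),
    Em_mul_ne n (2*n+1-k) i (2*n+2-k) (2*n+1-k) (by omega),
    Em_mul_ne n (k+1) (2*n+2-i) k (k+1) (by omega),
    Em_mul_ne n (k+1) (2*n+2-i) (2*n+2-k) (2*n+1-k) (by omega)]
  abel

lemma br_c (n i : ℕ) (h1 : 1 ≤ i) (h2 : i < n) :
    ⁅U' n (n+1) (n+2), V' n i (n+2)⁆ = V' n i (n+1) := by
  unfold U' V'
  rw [show 2*n+2-(n+1) = n+1 by omega, show 2*n+2-(n+2) = n by omega]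
  rw [Ring.lie_def]
  simp only [add_mul, mul_add]
  rw [Em_mul_ne n (n+1) (n+2) n i (by omega),
    Em_mul_same n (n+1) (n+2) (2*n+2-i) (by omega) (by omega),
    Em_mul_same n (n+1) n i (by omega) (by omega),
    Em_mul_ne n (n+1) n (n+2) (2*n+2-i) (by omega),
    Em_mul_ne n n i (n+1) (n+2) (by omega),
    Em_mul_ne n n i (n+1) n (by omega),
    Em_mul_ne n (n+2) (2*n+2-i) (n+1) (n+2) (by omega),
    Em_mul_ne n (n+2) (2*n+2-i) (n+1) n (by omega)]
  abel

lemma br_d (n i : ℕ) (h1 : 1 ≤ i) (h2 : i < n) :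
    ⁅U' n n (n+1), V' n i (n+1)⁆ = V' n i n + V' n i (n+2) := by
  unfold U' V'
  rw [show 2*n+2-(n+1) = n+1 by omega, show 2*n+2-n = n+2 by omega,
    show 2*n+2-(n+2) = n by omega]
  rw [Ring.lie_def]
  simp only [add_mul, mul_add]
  rw [Em_mul_same n n (n+1) i (by omega) (by omega),
    Em_mul_same n n (n+1) (2*n+2-i) (by omega) (by omega),
    Em_mul_same n (n+2) (n+1) i (by omega) (by omega),
    Em_mul_same n (n+2) (n+1) (2*n+2-i) (by omega) (by omega),
    Em_mul_ne n (n+1) i n (n+1) (by omega),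
    Em_mul_ne n (n+1) i (n+2) (n+1) (by omega),
    Em_mul_ne n (n+1) (2*n+2-i) n (n+1) (by omega),
    Em_mul_ne n (n+1) (2*n+2-i) (n+2) (n+1) (by omega)]
  abel

lemma br_e (n i k : ℕ) (h1 : 1 ≤ i) (h2 : i < k) (h3 : k < n) :
    ⁅U' n k (k+1), V' n i (k+1) + V' n i (2*n+1-k)⁆ = V' n i k + V' n i (2*n+2-k) := by
  unfold U' V'
  rw [show 2*n+2-(k+1) = 2*n+1-k by omega, show 2*n+2-(2*n+1-k) = k+1 by omega,
    show 2*n+2-(2*n+2-k) = k by omega]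
  rw [Ring.lie_def]
  simp only [add_mul, mul_add]
  rw [Em_mul_ne n k (k+1) (2*n+1-k) i (by omega),
    Em_mul_same n k (k+1) (2*n+2-i) (by omega) (by omega),
    Em_mul_same n k (k+1) i (by omega) (by omega),
    Em_mul_ne n k (k+1) (2*n+1-k) (2*n+2-i) (by omega),
    Em_mul_same n (2*n+2-k) (2*n+1-k) i (by omega) (by omega),
    Em_mul_ne n (2*n+2-k) (2*n+1-k) (k+1) (2*n+2-i) (by omega),
    Em_mul_ne n (2*n+2-k) (2*n+1-k) (k+1) i (by omega),
    Em_mul_same n (2*n+2-k) (2*n+1-k) (2*n+2-i) (by omega) (by omega),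
    Em_mul_ne n (2*n+1-k) i k (k+1) (by omega),
    Em_mul_ne n (2*n+1-k) i (2*n+2-k) (2*n+1-k) (by omega),
    Em_mul_ne n (k+1) (2*n+2-i) k (k+1) (by omega),
    Em_mul_ne n (k+1) (2*n+2-i) (2*n+2-k) (2*n+1-k) (by omega),
    Em_mul_ne n (k+1) i k (k+1) (by omega),
    Em_mul_ne n (k+1) i (2*n+2-k) (2*n+1-k) (by omega),
    Em_mul_ne n (2*n+1-k) (2*n+2-i) k (k+1) (by omega),
    Em_mul_ne n (2*n+1-k) (2*n+2-i) (2*n+2-k) (2*n+1-k) (by omega)]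
  abel

lemma br_f (n i : ℕ) (h1 : 1 ≤ i) (h2 : i < n) :
    ⁅U' n i (i+1), V' n i (i+1) + V' n i (2*n+1-i)⁆ =
      (dG n i + U' n i (2*n+2-i)) - (dG n (i+1) + U' n (i+1) (2*n+1-i)) := by
  unfold U' V' dG
  rw [show 2*n+2-(i+1) = 2*n+1-i by omega, show 2*n+2-(2*n+1-i) = i+1 by omega,
    show 2*n+2-(2*n+2-i) = i by omega]
  rw [Ring.lie_def]
  simp only [add_mul, mul_add]
  rw [Em_mul_ne n i (i+1) (2*n+1-i) i (by omega),
    Em_mul_same n i (i+1) (2*n+2-i) (by omega) (by omega),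
    Em_mul_same n i (i+1) i (by omega) (by omega),
    Em_mul_ne n i (i+1) (2*n+1-i) (2*n+2-i) (by omega),
    Em_mul_same n (2*n+2-i) (2*n+1-i) i (by omega) (by omega),
    Em_mul_ne n (2*n+2-i) (2*n+1-i) (i+1) (2*n+2-i) (by omega),
    Em_mul_ne n (2*n+2-i) (2*n+1-i) (i+1) i (by omega),
    Em_mul_same n (2*n+2-i) (2*n+1-i) (2*n+2-i) (by omega) (by omega),
    Em_mul_same n (2*n+1-i) i (i+1) (by omega) (by omega),
    Em_mul_ne n (2*n+1-i) i (2*n+2-i) (2*n+1-i) (by omega),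
    Em_mul_ne n (i+1) (2*n+2-i) i (i+1) (by omega),
    Em_mul_same n (i+1) (2*n+2-i) (2*n+1-i) (by omega) (by omega),
    Em_mul_same n (i+1) i (i+1) (by omega) (by omega),
    Em_mul_ne n (i+1) i (2*n+2-i) (2*n+1-i) (by omega),
    Em_mul_ne n (2*n+1-i) (2*n+2-i) i (i+1) (by omega),
    Em_mul_same n (2*n+1-i) (2*n+2-i) (2*n+1-i) (by omega) (by omega)]
  abel

lemma Xv_base (n i j : ℕ) (h : j ≤ i+1) : Xv n i j = simpleX n i := by
  rw [Xv, dif_pos h]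

lemma Xv_step (n i j : ℕ) (h : ¬ j ≤ i+1) :
    Xv n i j = ⁅simpleX n i, Xv n (i+1) j⁆ := by
  rw [Xv, dif_neg h]

lemma hv_base (n i : ℕ) (h : n+1 ≤ i) : hv n i = Em n (n+1) (n+1) := by
  rw [hv, if_pos h]

lemma hv_step (n i : ℕ) (h : ¬ n+1 ≤ i) :
    hv n i = hv n (i+1) + (1/2 : ℂ) • Xv n i (2*n+2-i) := by
  rw [hv, if_neg h]

lemma L1 (n i : ℕ) (h1 : 1 ≤ i) (h2 : i ≤ n) :
    ∀ m k, n+1 ≤ k → k ≤ 2*n+1-i → 2*n+1-i-k ≤ m →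
      Xv n k (2*n+2-i) = V' n i k := by
  intro m
  induction m with
  | zero =>
    intro k hka hkb hkc
    have hk : k = 2*n+1-i := by omega
    subst hk
    rw [Xv_base n _ _ (by omega), simpleX_eq n _ (by omega) (by omega)]
    unfold U' V'
    rw [show 2*n+1-i+1 = 2*n+2-i by omega, show 2*n+2-(2*n+1-i) = i+1 by omega,
      show 2*n+2-(2*n+2-i) = i by omega]
    abel
  | succ m ih =>
    intro k hka hkb hkc
    by_cases hk : k = 2*n+1-i
    · exact ih k hka hkb (by omega)
    · rw [Xv_step n k _ (by omega)]
      rw [ih (k+1) (by omega) (by omega) (by omega)]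
      rw [simpleX_eq n k (by omega) (by omega)]
      by_cases hkn : k = n+1
      · subst hkn
        rw [show n+1+1 = n+2 from rfl]
        exact br_c n i h1 (by omega)
      · exact br_b n i k h1 (by omega) (by omega)

lemma L2 (n i : ℕ) (h1 : 1 ≤ i) (h2 : i < n) :
    ∀ m k, i+1 ≤ k → k ≤ n → n-k ≤ m →
      Xv n k (2*n+2-i) = V' n i k + V' n i (2*n+2-k) := by
  intro m
  induction m with
  | zero =>
    intro k hka hkb hkc
    have hk : k = n := by omega
    rw [hk]
    rw [Xv_step n n _ (by omega)]
    rw [L1 n i h1 (by omega) (2*n+1-i) (n+1) (by omega) (by omega) (by omega)]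
    rw [simpleX_eq n n (by omega) (by omega)]
    rw [show 2*n+2-n = n+2 by omega]
    exact br_d n i h1 h2
  | succ m ih =>
    intro k hka hkb hkc
    by_cases hk : k = n
    · exact ih k hka hkb (by omega)
    · rw [Xv_step n k _ (by omega)]
      rw [ih (k+1) (by omega) (by omega) (by omega)]
      rw [show 2*n+2-(k+1) = 2*n+1-k by omega]
      rw [simpleX_eq n k (by omega) (by omega)]
      exact br_e n i k h1 (by omega) (by omega)

lemma L3a (n i : ℕ) (h1 : 1 ≤ i) (h2 : i < n) :
    Xv n i (2*n+2-i) =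
      (dG n i + U' n i (2*n+2-i)) - (dG n (i+1) + U' n (i+1) (2*n+1-i)) := by
  rw [Xv_step n i _ (by omega)]
  rw [L2 n i h1 h2 n (i+1) (by omega) (by omega) (by omega)]
  rw [show 2*n+2-(i+1) = 2*n+1-i by omega]
  rw [simpleX_eq n i (by omega) (by omega)]
  exact br_f n i h1 h2

lemma L3b (n : ℕ) (h : 1 ≤ n) :
    Xv n n (2*n+2-n) = (dG n n + U' n n (n+2)) - dG n (n+1) := by
  rw [show 2*n+2-n = n+2 by omega]
  rw [Xv_step n n (n+2) (by omega)]
  rw [Xv_base n (n+1) (n+2) (by omega)]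
  rw [simpleX_eq n n (by omega) (by omega), simpleX_eq n (n+1) (by omega) (by omega)]
  rw [show n+1+1 = n+2 from rfl]
  exact br_C n h

lemma hvS (n : ℕ) : ∀ m i, 1 ≤ i → i ≤ n → n-i ≤ m →
    hv n i = (1/2 : ℂ) • (dG n i + U' n i (2*n+2-i)) := by
  intro m
  induction m with
  | zero =>
    intro i hi1 hi2 hi3
    have hin : i = n := by omega
    rw [hin]
    rw [hv_step n n (by omega), hv_base n (n+1) (by omega), L3b n (by omega)]
    rw [show 2*n+2-n = n+2 by omega]
    have hdd : dG n (n+1) = Em n (n+1) (n+1) + Em n (n+1) (n+1) := by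
      unfold dG; rw [show 2*n+2-(n+1) = n+1 by omega]
    rw [hdd]
    module
  | succ m ih =>
    intro i hi1 hi2 hi3
    by_cases hin : i = n
    · exact ih i hi1 hi2 (by omega)
    · rw [hv_step n i (by omega), ih (i+1) (by omega) (by omega) (by omega),
        L3a n i hi1 (by omega)]
      rw [show 2*n+2-(i+1) = 2*n+1-i by omega]
      module

end Aux

/-- Under any Lie algebra homomorphism `φ : gl_{2n+1}(ℂ)^θ → gl_{n+1}(ℂ) ⊕ gl_n(ℂ)`
(in particular the isomorphism of the paper) satisfying `φ(e_i) = e_i + ē_i`,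
`φ(f_i) = f_i + f̄_i` (`i < n`), `φ(e_n) = 2e_n`, `φ(f_n) = f_n`, `φ(d_i) = h_i + h̄_i`,
`φ(d_{n+1}) = 2h_{n+1}`, one has `φ(h_i) = h_i = E_{i,i}` in the `gl_{n+1}` factor
for all `1 ≤ i ≤ n+1`. -/
theorem stmt_18 (n : ℕ)
    (φ : Fixed n →ₗ[ℂ] Matrix (Fin (n+1)) (Fin (n+1)) ℂ × Matrix (Fin n) (Fin n) ℂ)
    (hhom : ∀ x y z : Fixed n, (z : gl n) = ⁅(x : gl n), (y : gl n)⁆ →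
      (φ z).1 = ⁅(φ x).1, (φ y).1⁆ ∧ (φ z).2 = ⁅(φ x).2, (φ y).2⁆)
    (hef : ∀ i : ℕ, 1 ≤ i → i < n → ∀ x : Fixed n,
      ((x : gl n) = eG n i → φ x = (Eu (n+1) i (i+1), Eu n i (i+1))) ∧
      ((x : gl n) = fG n i → φ x = (Eu (n+1) (i+1) i, Eu n (i+1) i)))
    (hn' : ∀ x : Fixed n,
      ((x : gl n) = eG n n → φ x = ((2:ℂ) • Eu (n+1) n (n+1), 0)) ∧
      ((x : gl n) = fG n n → φ x = (Eu (n+1) (n+1) n, 0)))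
    (hd : ∀ i : ℕ, 1 ≤ i → i ≤ n → ∀ x : Fixed n, (x : gl n) = dG n i →
      φ x = (Eu (n+1) i i, Eu n i i))
    (hdlast : ∀ x : Fixed n, (x : gl n) = dG n (n+1) →
      φ x = ((2:ℂ) • Eu (n+1) (n+1) (n+1), 0)) :
    ∀ i : ℕ, 1 ≤ i → i ≤ n+1 → ∀ x : Fixed n, (x : gl n) = hv n i →
      φ x = (Eu (n+1) i i, 0) := by
  
  have key : ∀ (B C : gl n) (hB : B ∈ Fixed n) (hC : C ∈ Fixed n) (x : Fixed n)
      (PB : Matrix (Fin (n+1)) (Fin (n+1)) ℂ) (QB : Matrix (Fin n) (Fin n) ℂ)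
      (PC : Matrix (Fin (n+1)) (Fin (n+1)) ℂ) (QC : Matrix (Fin n) (Fin n) ℂ),
      φ ⟨B, hB⟩ = (PB, QB) → φ ⟨C, hC⟩ = (PC, QC) → (x : gl n) = ⁅B, C⁆ →
      φ x = (⁅PB, PC⁆, ⁅QB, QC⁆) := by
    intro B C hB hC x PB QB PC QC hPB hPC hx
    obtain ⟨ha, hb⟩ := hhom ⟨B, hB⟩ ⟨C, hC⟩ x hx
    have e1 : (φ x).1 = ⁅PB, PC⁆ := by rw [ha, hPB, hPC]
    have e2 : (φ x).2 = ⁅QB, QC⁆ := by rw [hb, hPB, hPC]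
    calc φ x = ((φ x).1, (φ x).2) := rfl
    _ = (⁅PB, PC⁆, ⁅QB, QC⁆) := by rw [e1, e2]
  -- chain 1 : φ(U' i k) for i < k ≤ n
  have chain1 : ∀ i, 1 ≤ i → ∀ k, i+1 ≤ k → k ≤ n → ∀ x : Fixed n,
      (x : gl n) = U' n i k → φ x = (Eu (n+1) i k, Eu n i k) := by
    intro i hi k hk
    induction k, hk using Nat.le_induction with
    | base =>
      intro hkn x hx
      exact (hef i hi (by omega) x).1 (by rw [hx, eG_eq])
    | succ k hk ihk =>
      intro hkn x hx
      have hBmem := U'_mem n i k (by omega) (by omega) (by omega) (by omega)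
      have hCmem := U'_mem n k (k+1) (by omega) (by omega) (by omega) (by omega)
      have hφB := ihk (by omega) ⟨U' n i k, hBmem⟩ rfl
      have hφC : φ ⟨U' n k (k+1), hCmem⟩ = (Eu (n+1) k (k+1), Eu n k (k+1)) :=
        (hef k (by omega) (by omega) _).1 (by show U' n k (k+1) = eG n k; rw [eG_eq])
      have hx' : (x : gl n) = ⁅U' n i k, U' n k (k+1)⁆ := by
        rw [hx, br_gen n i k (k+1) (by omega) (by omega) (by omega) (by omega)
          (by omega) (by omega) (by omega) (by omega) (by omega)]
      have hres := key _ _ hBmem hCmem x _ _ _ _ hφB hφC hx'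
      rw [hres, lie_Eu_same (n+1) i k (k+1) (by omega) (by omega) (by omega),
        lie_Eu_same n i k (k+1) (by omega) (by omega) (by omega)]
  -- chain 2 : φ(U' i (n+1))
  have chain2 : ∀ i, 1 ≤ i → i ≤ n → ∀ x : Fixed n,
      (x : gl n) = U' n i (n+1) → φ x = ((2:ℂ) • Eu (n+1) i (n+1), 0) := by
    intro i hi hin x hx
    by_cases hji : i = n
    · subst hji
      exact (hn' x).1 (by rw [hx, eG_eq])
    · have hBmem := U'_mem n i n (by omega) (by omega) (by omega) (by omega)
      have hCmem := U'_mem n n (n+1) (by omega) (by omega) (by omega) (by omega)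
      have hφB := chain1 i hi n (by omega) (by omega) ⟨U' n i n, hBmem⟩ rfl
      have hφC : φ ⟨U' n n (n+1), hCmem⟩ = ((2:ℂ) • Eu (n+1) n (n+1), 0) :=
        (hn' _).1 (by show U' n n (n+1) = eG n n; rw [eG_eq])
      have hx' : (x : gl n) = ⁅U' n i n, U' n n (n+1)⁆ := by
        rw [hx, br_gen n i n (n+1) (by omega) (by omega) (by omega) (by omega)
          (by omega) (by omega) (by omega) (by omega) (by omega)]
      have hres := key _ _ hBmem hCmem x _ _ _ _ hφB hφC hx'
      rw [hres, lie_smul_r, lie_Eu_same (n+1) i n (n+1) (by omega) (by omega) (by omega),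
        lie_zero_r]
  -- chain 3 : φ(U' i k) for n+2 ≤ k ≤ 2n+1-i
  have chain3 : ∀ i, 1 ≤ i → i < n → ∀ k, n+2 ≤ k → k ≤ 2*n+1-i → ∀ x : Fixed n,
      (x : gl n) = U' n i k →
      φ x = (Eu (n+1) i (2*n+2-k), -Eu n i (2*n+2-k)) := by
    intro i hi hin k hk
    induction k, hk using Nat.le_induction with
    | base =>
      intro hkb x hx
      rw [show 2*n+2-(n+2) = n by omega]
      have hBmem := U'_mem n i (n+1) (by omega) (by omega) (by omega) (by omega)
      have hCmem := U'_mem n (n+1) (n+2) (by omega) (by omega) (by omega) (by omega)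
      have hWmem := U'_mem n i n (by omega) (by omega) (by omega) (by omega)
      have hφB := chain2 i hi (by omega) ⟨U' n i (n+1), hBmem⟩ rfl
      have hφC : φ ⟨U' n (n+1) (n+2), hCmem⟩ = (Eu (n+1) (n+1) n, 0) :=
        (hn' _).2 (by show U' n (n+1) (n+2) = fG n n; rw [fG_eq, U'_fGn n (by omega)])
      have hφw := chain1 i hi n (by omega) (by omega) ⟨U' n i n, hWmem⟩ rfl
      have hsum : (((⟨U' n i n, hWmem⟩ + x : Fixed n)) : gl n)
          = ⁅U' n i (n+1), U' n (n+1) (n+2)⁆ := by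
        rw [br_A n i (by omega) (by omega), Submodule.coe_add, hx]
      have hres := key _ _ hBmem hCmem _ _ _ _ _ hφB hφC hsum
      have hx2 : φ x = φ (⟨U' n i n, hWmem⟩ + x) - φ ⟨U' n i n, hWmem⟩ := by
        rw [map_add]; abel
      rw [hx2, hres, hφw, smul_lie_r,
        lie_Eu_same (n+1) i (n+1) n (by omega) (by omega) (by omega), lie_zero_r,
        Prod.mk_sub_mk]
      have c1 : (2:ℂ) • Eu (n+1) i n - Eu (n+1) i n = Eu (n+1) i n := by module
      have c2 : (0 : Matrix (Fin n) (Fin n) ℂ) - Eu n i n = -Eu n i n := by abel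
      rw [c1, c2]
    | succ k hk ihk =>
      intro hkb x hx
      have hBmem := U'_mem n i k (by omega) (by omega) (by omega) (by omega)
      have hCmem := U'_mem n k (k+1) (by omega) (by omega) (by omega) (by omega)
      have hφB := ihk (by omega) ⟨U' n i k, hBmem⟩ rfl
      have hφC : φ ⟨U' n k (k+1), hCmem⟩
          = (Eu (n+1) (2*n+2-k) (2*n+1-k), Eu n (2*n+2-k) (2*n+1-k)) := by
        have h2 := (hef (2*n+1-k) (by omega) (by omega) ⟨U' n k (k+1), hCmem⟩).2
        rw [show 2*n+1-k+1 = 2*n+2-k by omega] at h2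
        exact h2 (by rw [fG_eq' n k (by omega) (by omega)])
      have hx' : (x : gl n) = ⁅U' n i k, U' n k (k+1)⁆ := by
        rw [hx, br_gen n i k (k+1) (by omega) (by omega) (by omega) (by omega)
          (by omega) (by omega) (by omega) (by omega) (by omega)]
      have hres := key _ _ hBmem hCmem x _ _ _ _ hφB hφC hx'
      rw [show 2*n+2-(k+1) = 2*n+1-k by omega]
      rw [hres, lie_Eu_same (n+1) i (2*n+2-k) (2*n+1-k) (by omega) (by omega) (by omega),
        neg_lie_r, lie_Eu_same n i (2*n+2-k) (2*n+1-k) (by omega) (by omega) (by omega)]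
  -- T recursion
  have Tres : ∀ m i, 1 ≤ i → i ≤ n → n-i ≤ m → ∀ x : Fixed n,
      (x : gl n) = U' n i (2*n+2-i) → φ x = (Eu (n+1) i i, -Eu n i i) := by
    intro m
    induction m with
    | zero =>
      intro i hi1 hi2 hi3 x hx
      have hin : i = n := by omega
      rw [hin] at hx ⊢
      rw [show 2*n+2-n = n+2 by omega] at hx
      have hBmem := U'_mem n n (n+1) (by omega) (by omega) (by omega) (by omega)
      have hCmem := U'_mem n (n+1) (n+2) (by omega) (by omega) (by omega) (by omega)
      have hd1m := U'_mem n n n (by omega) (by omega) (by omega) (by omega)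
      have hd2m := U'_mem n (n+1) (n+1) (by omega) (by omega) (by omega) (by omega)
      have hd1m' : dG n n ∈ Fixed n := hd1m
      have hd2m' : dG n (n+1) ∈ Fixed n := hd2m
      have hφB : φ ⟨U' n n (n+1), hBmem⟩ = ((2:ℂ) • Eu (n+1) n (n+1), 0) :=
        (hn' _).1 (by show U' n n (n+1) = eG n n; rw [eG_eq])
      have hφC : φ ⟨U' n (n+1) (n+2), hCmem⟩ = (Eu (n+1) (n+1) n, 0) :=
        (hn' _).2 (by show U' n (n+1) (n+2) = fG n n; rw [fG_eq, U'_fGn n (by omega)])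
      have hφd1 : φ ⟨dG n n, hd1m'⟩ = (Eu (n+1) n n, Eu n n n) :=
        hd n (by omega) le_rfl _ rfl
      have hφd2 : φ ⟨dG n (n+1), hd2m'⟩ = ((2:ℂ) • Eu (n+1) (n+1) (n+1), 0) :=
        hdlast _ rfl
      have hsum : (((⟨dG n n, hd1m'⟩ + x - ⟨dG n (n+1), hd2m'⟩ : Fixed n)) : gl n)
          = ⁅U' n n (n+1), U' n (n+1) (n+2)⁆ := by
        rw [br_C n (by omega), AddSubgroupClass.coe_sub, Submodule.coe_add, hx]
      have hres := key _ _ hBmem hCmem _ _ _ _ _ hφB hφC hsum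
      have hx2 : φ x = φ (⟨dG n n, hd1m'⟩ + x - ⟨dG n (n+1), hd2m'⟩)
          - φ ⟨dG n n, hd1m'⟩ + φ ⟨dG n (n+1), hd2m'⟩ := by
        rw [map_sub, map_add]; abel
      rw [hx2, hres, hφd1, hφd2, smul_lie_r,
        lie_Eu_diag (n+1) n (n+1) (by omega) (by omega) (by omega) (by omega) (by omega),
        lie_zero_r, Prod.mk_sub_mk, Prod.mk_add_mk]
      have c1 : (2:ℂ) • (Eu (n+1) n n - Eu (n+1) (n+1) (n+1)) - Eu (n+1) n n
          + (2:ℂ) • Eu (n+1) (n+1) (n+1) = Eu (n+1) n n := by module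
      have c2 : (0 : Matrix (Fin n) (Fin n) ℂ) - Eu n n n + 0 = -Eu n n n := by abel
      rw [c1, c2]
    | succ m ihm =>
      intro i hi1 hi2 hi3 x hx
      by_cases hin : i = n
      · exact ihm i hi1 hi2 (by omega) x hx
      · have hBmem := U'_mem n i (2*n+1-i) (by omega) (by omega) (by omega) (by omega)
        have hCmem := U'_mem n (2*n+1-i) (2*n+2-i) (by omega) (by omega) (by omega) (by omega)
        have hTmem := U'_mem n (i+1) (2*n+1-i) (by omega) (by omega) (by omega) (by omega)
        have hφB : φ ⟨U' n i (2*n+1-i), hBmem⟩ = (Eu (n+1) i (i+1), -Eu n i (i+1)) := by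
          have h3 := chain3 i hi1 (by omega) (2*n+1-i) (by omega) (by omega)
            ⟨U' n i (2*n+1-i), hBmem⟩ rfl
          rw [show 2*n+2-(2*n+1-i) = i+1 by omega] at h3
          exact h3
        have hφC : φ ⟨U' n (2*n+1-i) (2*n+2-i), hCmem⟩ = (Eu (n+1) (i+1) i, Eu n (i+1) i) := by
          apply (hef i hi1 (by omega) _).2
          show U' n (2*n+1-i) (2*n+2-i) = fG n i
          rw [fG_eq, U'_fGi n i hi1 (by omega)]
        have hφT : φ ⟨U' n (i+1) (2*n+1-i), hTmem⟩
            = (Eu (n+1) (i+1) (i+1), -Eu n (i+1) (i+1)) := by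
          apply ihm (i+1) (by omega) (by omega) (by omega)
          show U' n (i+1) (2*n+1-i) = U' n (i+1) (2*n+2-(i+1))
          rw [show 2*n+2-(i+1) = 2*n+1-i by omega]
        have hsum : (((x - ⟨U' n (i+1) (2*n+1-i), hTmem⟩ : Fixed n)) : gl n)
            = ⁅U' n i (2*n+1-i), U' n (2*n+1-i) (2*n+2-i)⁆ := by
          rw [br_B n i hi1 (by omega), AddSubgroupClass.coe_sub, hx]
        have hres := key _ _ hBmem hCmem _ _ _ _ _ hφB hφC hsum
        have hx2 : φ x = φ (x - ⟨U' n (i+1) (2*n+1-i), hTmem⟩)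
            + φ ⟨U' n (i+1) (2*n+1-i), hTmem⟩ := by
          rw [map_sub]; abel
        rw [hx2, hres, hφT,
          lie_Eu_diag (n+1) i (i+1) (by omega) (by omega) (by omega) (by omega) (by omega),
          neg_lie_r,
          lie_Eu_diag n i (i+1) (by omega) (by omega) (by omega) (by omega) (by omega),
          Prod.mk_add_mk]
        have c1 : (Eu (n+1) i i - Eu (n+1) (i+1) (i+1)) + Eu (n+1) (i+1) (i+1)
            = Eu (n+1) i i := by abel
        have c2 : -(Eu n i i - Eu n (i+1) (i+1)) + -Eu n (i+1) (i+1) = -Eu n i i := by abel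
        rw [c1, c2]
  -- final assembly
  intro i hi1 hi2 x hx
  by_cases htop : i = n+1
  · subst htop
    rw [hv_base n (n+1) le_rfl] at hx
    have hdm : dG n (n+1) ∈ Fixed n :=
      U'_mem n (n+1) (n+1) (by omega) (by omega) (by omega) (by omega)
    have hφd := hdlast ⟨dG n (n+1), hdm⟩ rfl
    have hdx : (⟨dG n (n+1), hdm⟩ : Fixed n) = (2:ℂ) • x := by
      apply Subtype.ext
      rw [Submodule.coe_smul, hx]
      show dG n (n+1) = (2:ℂ) • Em n (n+1) (n+1)
      unfold dG
      rw [show 2*n+2-(n+1) = n+1 by omega]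
      module
    rw [hdx, _root_.map_smul] at hφd
    have h12 : φ x = ((1/2:ℂ)) • ((2:ℂ) • φ x) := by
      rw [smul_smul]; norm_num
    rw [h12, hφd, Prod.smul_mk]
    have c1 : (1/2:ℂ) • ((2:ℂ) • Eu (n+1) (n+1) (n+1)) = Eu (n+1) (n+1) (n+1) := by module
    have c2 : (1/2:ℂ) • (0 : Matrix (Fin n) (Fin n) ℂ) = 0 := smul_zero _
    rw [c1, c2]
  · have hin : i ≤ n := by omega
    rw [hvS n n i hi1 hin (by omega)] at hx
    have hdm : dG n i ∈ Fixed n := U'_mem n i i (by omega) (by omega) (by omega) (by omega)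
    have hUm : U' n i (2*n+2-i) ∈ Fixed n :=
      U'_mem n i (2*n+2-i) (by omega) (by omega) (by omega) (by omega)
    have hφd : φ ⟨dG n i, hdm⟩ = (Eu (n+1) i i, Eu n i i) := hd i hi1 hin _ rfl
    have hφU := Tres n i hi1 hin (by omega) ⟨U' n i (2*n+2-i), hUm⟩ rfl
    have hxe : x = (1/2:ℂ) • (⟨dG n i, hdm⟩ + ⟨U' n i (2*n+2-i), hUm⟩ : Fixed n) := by
      apply Subtype.ext
      rw [hx, Submodule.coe_smul, Submodule.coe_add]
    rw [hxe, _root_.map_smul, map_add, hφd, hφU, Prod.mk_add_mk, Prod.smul_mk]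
    have c1 : (1/2:ℂ) • (Eu (n+1) i i + Eu (n+1) i i) = Eu (n+1) i i := by module
    have c2 : (1/2:ℂ) • (Eu n i i + -Eu n i i) = (0 : Matrix (Fin n) (Fin n) ℂ) := by
      module
    rw [c1, c2]
end
end

section
/- In gl_{2n+1}(ℂ)^θ, the 2n+1 elements d_1, …, d_n, h_1, …, h_{n+1} pairwise commute, where d_i = H_i + H_{2n+2−i} and h_i are defined recursively by h_{n+1} = H_{n+1}, h_i = h_{i+1} + (1/2)X_{μ_i−μ_{2n+2−i}} with X the iterated-bracket root vectors; hence they span an abelian subalgebra strictly containing the θ-fixed Cartan subalgebra h^θ. -/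
open Matrix

noncomputable section

/-!
For `1 ≤ i ≤ n` the iterated brackets telescope: `X_{μ_i-μ_{2n+2-i}} = Q_i - Q_{i+1}` for `i < n`
and `X_{μ_n-μ_{n+2}} = Q_n - 2 E_{n+1,n+1}`, where `Q_i` (`onesBlock n i`) is the all-ones `2 × 2`
block on the rows and columns `i` and `2n+2-i`. Hence `h_i = ½ Q_i`. The blocks `Q_i` and
`E_{n+1,n+1}` have pairwise disjoint supports, so their products vanish, and each `d_a` acts on
the block `Q_a` as the identity and annihilates the others: everything commutes. The inclusion
is strict because `h_1` has the nonzero corner entry `(1, 2n+1)`, while every `d_a` is diagonal.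
-/
lemma Em_mul_Em (n p q r s : ℕ) :
    Em n p q * Em n r s = if q = r ∧ 1 ≤ q ∧ q ≤ 2*n+1 then Em n p s else 0 := by
  ext i j
  simp only [Em, Matrix.mul_apply, Matrix.of_apply]
  split_ifs with h
  · obtain ⟨rfl, hq1, hq2⟩ := h
    rw [Finset.sum_eq_single ⟨q - 1, by omega⟩ (fun k _ hk => ?_) (by simp)]
    · simp only [show q - 1 + 1 = q by omega, and_true, true_and, ite_mul, one_mul, zero_mul]
      split_ifs <;> simp_all
    · have : (k : ℕ) + 1 ≠ q := fun h => hk (Fin.ext (by simp; omega))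
      simp [this]
  · refine Finset.sum_eq_zero fun k _ => ?_
    split_ifs <;> simp_all; omega

lemma Em_mul_Em_of_eq (n : ℕ) {p q r s : ℕ} (h : q = r) (hq1 : 1 ≤ q) (hq2 : q ≤ 2*n+1) :
    Em n p q * Em n r s = Em n p s := by
  rw [Em_mul_Em, if_pos ⟨h, hq1, hq2⟩]

lemma Em_mul_Em_of_ne (n : ℕ) {p q r s : ℕ} (h : q ≠ r) : Em n p q * Em n r s = 0 := by
  rw [Em_mul_Em, if_neg (by tauto)]

lemma simpleX_eq_s19 (n k : ℕ) (h : k ≤ 2*n+1) :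
    simpleX n k = Em n k (k+1) + Em n (2*n+2-k) (2*n+1-k) := by
  unfold simpleX eG fG
  split_ifs
  · rfl
  · rw [show 2*n+1-(2*n+1-k) = k by omega, show 2*n+1-k+1 = 2*n+2-k by omega,
      show 2*n+2-(2*n+1-k) = k+1 by omega, add_comm]

lemma Xv_mirror_of_n_lt {n i k : ℕ} (hnk : n < k) (hk : k ≤ 2*n+1-i) :
    Xv n k (2*n+2-i) = Em n (2*n+2-k) i + Em n k (2*n+2-i) := by
  rcases hk.lt_or_eq with hk | rfl
  · rw [Xv, dif_neg (by omega), Xv_mirror_of_n_lt (hnk.trans (by omega)) (by omega),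
      simpleX_eq_s19 n k (by omega), Ring.lie_def]
    -- `omega` decides, index by index, which products of matrix units survive
    simp (disch := omega) only [add_mul, mul_add, Em_mul_Em_of_eq, Em_mul_Em_of_ne]
    abel
  · rw [Xv, dif_pos (by omega), simpleX_eq_s19 n _ (by omega),
      show 2*n+1-(2*n+1-i) = i by omega, show 2*n+1-i+1 = 2*n+2-i by omega, add_comm]
termination_by 2*n+1-i-k

lemma Xv_mirror_of_lt_of_le {n i k : ℕ} (hik : i < k) (hkn : k ≤ n) :
    Xv n k (2*n+2-i) =
      Em n k i + Em n k (2*n+2-i) + Em n (2*n+2-k) i + Em n (2*n+2-k) (2*n+2-i) := by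
  rw [Xv, dif_neg (by omega), simpleX_eq_s19 n k (by omega), Ring.lie_def]
  rcases hkn.lt_or_eq with hkn | rfl
  · rw [Xv_mirror_of_lt_of_le (hik.trans (by omega)) hkn]
    simp (disch := omega) only [add_mul, mul_add, Em_mul_Em_of_eq, Em_mul_Em_of_ne]
    abel
  · rw [Xv_mirror_of_n_lt (by omega) (by omega)]
    simp (disch := omega) only [add_mul, mul_add, Em_mul_Em_of_eq, Em_mul_Em_of_ne]
    abel
termination_by n - k

def onesBlock (n j : ℕ) : gl n :=
  Em n j j + Em n j (2*n+2-j) + Em n (2*n+2-j) j + Em n (2*n+2-j) (2*n+2-j)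

lemma Xv_mirror_self_of_lt {n i : ℕ} (hi : 1 ≤ i) (hin : i < n) :
    Xv n i (2*n+2-i) = onesBlock n i - onesBlock n (i+1) := by
  rw [Xv, dif_neg (by omega), Xv_mirror_of_lt_of_le (by omega) (by omega),
    simpleX_eq_s19 n i (by omega), Ring.lie_def, show 2*n+1-i = 2*n+2-(i+1) by omega]
  simp (disch := omega) only [add_mul, mul_add, Em_mul_Em_of_eq, Em_mul_Em_of_ne, onesBlock]
  abel

lemma Xv_mirror_self_n {n : ℕ} (hn : 1 ≤ n) :
    Xv n n (2*n+2-n) = onesBlock n n - (2 : ℂ) • Em n (n+1) (n+1) := by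
  rw [Xv, dif_neg (by omega), Xv_mirror_of_n_lt (by omega) (by omega),
    simpleX_eq_s19 n n (by omega), Ring.lie_def, show 2*n+1-n = n+1 by omega,
    show 2*n+2-(n+1) = n+1 by omega]
  simp (disch := omega) only [add_mul, mul_add, Em_mul_Em_of_eq, Em_mul_Em_of_ne, onesBlock]
  module

lemma hv_middle (n : ℕ) : hv n (n+1) = Em n (n+1) (n+1) := by
  rw [hv, if_pos le_rfl]

lemma hv_eq_half_onesBlock {n i : ℕ} (hi : 1 ≤ i) (hin : i ≤ n) :
    hv n i = (1/2 : ℂ) • onesBlock n i := by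
  rw [hv, if_neg (by omega)]
  rcases hin.lt_or_eq with hin | rfl
  · rw [hv_eq_half_onesBlock (by omega) hin, Xv_mirror_self_of_lt hi hin]
    module
  · rw [hv_middle, Xv_mirror_self_n hi]
    module
termination_by n - i

lemma commute_Em_diag (n p q : ℕ) : Commute (Em n p p) (Em n q q) := by
  rcases eq_or_ne p q with rfl | h
  · rfl
  · rw [Commute, SemiconjBy, Em_mul_Em_of_ne n h, Em_mul_Em_of_ne n h.symm]

lemma commute_dG_dG (n a b : ℕ) : Commute (dG n a) (dG n b) := by
  unfold dG
  apply_rules [Commute.add_left, Commute.add_right, commute_Em_diag]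

lemma commute_dG_Em_middle (n a : ℕ) : Commute (dG n a) (Em n (n+1) (n+1)) := by
  unfold dG
  apply_rules [Commute.add_left, commute_Em_diag]

lemma onesBlock_mul_onesBlock_of_ne {n i j : ℕ} (hij : i ≠ j) (hi : i ≤ n) (hj : j ≤ n) :
    onesBlock n i * onesBlock n j = 0 := by
  simp (disch := omega) only [onesBlock, add_mul, mul_add, Em_mul_Em_of_ne, add_zero]

lemma commute_onesBlock {n i j : ℕ} (hi : i ≤ n) (hj : j ≤ n) :
    Commute (onesBlock n i) (onesBlock n j) := by
  rcases eq_or_ne i j with rfl | hij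
  · rfl
  · rw [Commute, SemiconjBy, onesBlock_mul_onesBlock_of_ne hij hi hj,
      onesBlock_mul_onesBlock_of_ne hij.symm hj hi]

lemma commute_Em_middle_onesBlock {n j : ℕ} (hj : j ≤ n) :
    Commute (Em n (n+1) (n+1)) (onesBlock n j) := by
  simp (disch := omega) only [Commute, SemiconjBy, onesBlock, add_mul, mul_add,
    Em_mul_Em_of_ne, add_zero]

lemma commute_dG_onesBlock {n a j : ℕ} (ha : 1 ≤ a) (han : a ≤ n) (hj : j ≤ n) :
    Commute (dG n a) (onesBlock n j) := by
  rcases eq_or_ne a j with rfl | haj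
  · simp (disch := omega) only [Commute, SemiconjBy, dG, onesBlock, add_mul, mul_add,
      Em_mul_Em_of_eq, Em_mul_Em_of_ne, add_zero, zero_add]
    abel
  · simp (disch := omega) only [Commute, SemiconjBy, dG, onesBlock, add_mul, mul_add,
      Em_mul_Em_of_ne, add_zero]

lemma hv_eq_or_eq {n j : ℕ} (hj : 1 ≤ j) (hjn : j ≤ n+1) :
    (j ≤ n ∧ hv n j = (1/2 : ℂ) • onesBlock n j) ∨ hv n j = Em n (n+1) (n+1) := by
  rcases hjn.lt_or_eq with hjn | rfl
  · exact Or.inl ⟨by omega, hv_eq_half_onesBlock hj (by omega)⟩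
  · exact Or.inr (hv_middle n)

lemma commute_dG_hv {n a j : ℕ} (ha : 1 ≤ a) (han : a ≤ n) (hj : 1 ≤ j) (hjn : j ≤ n+1) :
    Commute (dG n a) (hv n j) := by
  rcases hv_eq_or_eq hj hjn with ⟨hjn, hvj⟩ | hvj <;> rw [hvj]
  · exact (commute_dG_onesBlock ha han hjn).smul_right _
  · exact commute_dG_Em_middle n a

lemma commute_hv_hv {n i j : ℕ} (hi : 1 ≤ i) (hin : i ≤ n+1) (hj : 1 ≤ j) (hjn : j ≤ n+1) :
    Commute (hv n i) (hv n j) := by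
  rcases hv_eq_or_eq hi hin with ⟨hin, hvi⟩ | hvi <;>
    rcases hv_eq_or_eq hj hjn with ⟨hjn, hvj⟩ | hvj <;> rw [hvi, hvj]
  · exact ((commute_onesBlock hin hjn).smul_left _).smul_right _
  · exact ((commute_Em_middle_onesBlock hin).symm.smul_left _)
  · exact ((commute_Em_middle_onesBlock hjn).smul_right _)

lemma dG_apply_of_ne (n a : ℕ) {i j : Fin (2*n+1)} (hij : i ≠ j) : dG n a i j = 0 := by
  have : (i : ℕ) ≠ j := Fin.val_ne_of_ne hij
  simp only [dG, Em, Matrix.add_apply, Matrix.of_apply]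
  split_ifs <;> first | omega | simp

lemma hv_one_notMem_span_dG {n : ℕ} (hn : 1 ≤ n) :
    hv n 1 ∉ Submodule.span ℂ {y : gl n | ∃ a, y = dG n a} := by
  let corner : gl n →ₗ[ℂ] ℂ := Matrix.entryLinearMap ℂ ℂ ⟨0, by omega⟩ ⟨2*n, by omega⟩
  have hle : Submodule.span ℂ {y : gl n | ∃ a, y = dG n a} ≤ LinearMap.ker corner := by
    rw [Submodule.span_le]
    rintro _ ⟨a, rfl⟩
    exact dG_apply_of_ne n a (Fin.ne_of_val_ne (by simp; omega))
  intro hmem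
  have h := hle hmem
  rw [LinearMap.mem_ker, hv_eq_half_onesBlock le_rfl hn] at h
  simp [corner, onesBlock, Em, Nat.one_le_iff_ne_zero.mp hn] at h

lemma dG_middle (n : ℕ) : dG n (n+1) = (2 : ℂ) • hv n (n+1) := by
  rw [hv_middle, dG, show 2*n+2-(n+1) = n+1 by omega, two_smul]

/-- In `gl_{2n+1}(ℂ)^θ`, the `2n+1` elements `d_1, …, d_n, h_1, …, h_{n+1}` pairwise
commute, and they span an abelian subalgebra strictly containing the `θ`-fixed Cartan
subalgebra `h^θ = span{d_1,…,d_n,d_{n+1}}` (where `d_{n+1} = 2H_{n+1}`). -/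
theorem stmt_19 (n : ℕ) (hn : 1 ≤ n) :
    (∀ a b : ℕ, 1 ≤ a → a ≤ n → 1 ≤ b → b ≤ n → ⁅dG n a, dG n b⁆ = 0) ∧
    (∀ a j : ℕ, 1 ≤ a → a ≤ n → 1 ≤ j → j ≤ n+1 → ⁅dG n a, hv n j⁆ = 0) ∧
    (∀ i j : ℕ, 1 ≤ i → i ≤ n+1 → 1 ≤ j → j ≤ n+1 → ⁅hv n i, hv n j⁆ = 0) ∧
    Submodule.span ℂ {y : gl n | ∃ a : ℕ, 1 ≤ a ∧ a ≤ n+1 ∧ y = dG n a} <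
      Submodule.span ℂ
        ({y : gl n | ∃ a : ℕ, 1 ≤ a ∧ a ≤ n ∧ y = dG n a} ∪
          {y : gl n | ∃ i : ℕ, 1 ≤ i ∧ i ≤ n+1 ∧ y = hv n i}) := by
  refine ⟨fun a b _ _ _ _ => (commute_dG_dG n a b).lie_eq,
    fun a j ha han hj hjn => (commute_dG_hv ha han hj hjn).lie_eq,
    fun i j hi hin hj hjn => (commute_hv_hv hi hin hj hjn).lie_eq, ?_⟩
  refine SetLike.lt_iff_le_and_exists.mpr ⟨Submodule.span_le.mpr ?_, hv n 1,
    Submodule.subset_span (Or.inr ⟨1, le_rfl, by omega, rfl⟩),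
    fun h => hv_one_notMem_span_dG hn (Submodule.span_mono ?_ h)⟩
  · rintro _ ⟨a, ha, han, rfl⟩
    rcases han.lt_or_eq with han | rfl
    · exact Submodule.subset_span (Or.inl ⟨a, ha, by omega, rfl⟩)
    · rw [dG_middle]
      exact Submodule.smul_mem _ _ (Submodule.subset_span (Or.inr ⟨n+1, by omega, le_rfl, rfl⟩))
  · exact fun _ ⟨a, _, _, h⟩ => ⟨a, h⟩
end
end
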